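/- arXiv:1702.05139 — 7 statements merged into one kernel-verified Lean document; each statement's English description precedes it below -/
import Mathlib

section
/- Let M be a symmetric N×N integer matrix with all entries bounded in absolute value by B. Then every nonzero eigenvalue of M has absolute value at least (B·N)^(−N). -/
/-!
The characteristic polynomial of `M` has integer coefficients and splits over `ℝ` as
`∏ (X - λⱼ)`. Its lowest nonvanishing coefficient is, up to sign, the product of the nonzero
eigenvalues, so that product has absolute value at least `1`. By Gershgorin every eigenvalue
satisfies `|λ| ≤ B N`, hence each nonzero eigenvalue is at least `(B N)^(-N)` in absolute value.
-/

open Polynomial Finset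

theorem Matrix.norm_le_card_mul_of_mem_spectrum {K n : Type*} [NormedField K] [Fintype n]
    [DecidableEq n] {A : Matrix n n K} {b : ℝ} (hA : ∀ i j, ‖A i j‖ ≤ b) {μ : K}
    (hμ : μ ∈ spectrum K A) : ‖μ‖ ≤ Fintype.card n * b := by
  rw [← Matrix.spectrum_toLin', ← Module.End.hasEigenvalue_iff_mem_spectrum] at hμ
  obtain ⟨k, hk⟩ := eigenvalue_mem_ball hμ
  calc ‖μ‖ ≤ ‖A k k‖ + ∑ j ∈ univ.erase k, ‖A k j‖ :=
        norm_le_norm_add_const_of_dist_le (Metric.mem_closedBall.mp hk)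
    _ = ∑ j, ‖A k j‖ := add_sum_erase _ (fun j => ‖A k j‖) (mem_univ k)
    _ ≤ ∑ _j : n, b := sum_le_sum fun j _ => hA k j
    _ = Fintype.card n * b := by simp

theorem one_le_prod_abs_of_prod_X_sub_C_eq_map {ι : Type*} [Fintype ι] {μ : ι → ℝ}
    (q : ℤ[X]) (hq : q.map (Int.castRingHom ℝ) = ∏ j, (X - C (μ j))) :
    1 ≤ ∏ j ∈ univ.filter (μ · ≠ 0), |μ j| := by
  classical
  set S := univ.filter (μ · ≠ 0)
  set k := (univ.filter (μ · = 0)).card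
  have hfactor : ∏ j, (X - C (μ j)) = (∏ j ∈ S, (X - C (μ j))) * X ^ k := by
    have hzero : ∀ j ∈ univ.filter (μ · = 0), X - C (μ j) = X := fun j hj => by
      simp [(mem_filter.mp hj).2]
    rw [← prod_filter_not_mul_prod_filter univ (μ · = 0), prod_congr rfl hzero, prod_const]
  have hcoeff : (q.coeff k : ℝ) = ∏ j ∈ S, -μ j := by
    rw [← eq_intCast (Int.castRingHom ℝ), ← coeff_map, hq, hfactor, coeff_mul_X_pow',
      if_pos le_rfl, Nat.sub_self, coeff_zero_eq_eval_zero, eval_prod]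
    simp
  have hne : q.coeff k ≠ 0 := by
    intro h
    rw [h, Int.cast_zero, eq_comm, prod_eq_zero_iff] at hcoeff
    obtain ⟨j, hj, hj0⟩ := hcoeff
    exact (mem_filter.mp hj).2 (neg_eq_zero.mp hj0)
  calc (1 : ℝ) ≤ |(q.coeff k : ℝ)| := by exact_mod_cast Int.one_le_abs hne
    _ = ∏ j ∈ S, |μ j| := by rw [hcoeff, abs_prod]; simp only [abs_neg]

theorem le_abs_of_one_le_prod_abs {ι : Type*} [Fintype ι] [DecidableEq ι] {s : Finset ι}
    {μ : ι → ℝ} {c : ℝ} (hc : 1 ≤ c) (hμ : ∀ j, |μ j| ≤ c)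
    (hprod : 1 ≤ ∏ j ∈ s, |μ j|) {i : ι} (hi : i ∈ s) :
    c ^ (-(Fintype.card ι : ℤ)) ≤ |μ i| := by
  have hrest : ∏ j ∈ s.erase i, |μ j| ≤ c ^ Fintype.card ι :=
    calc ∏ j ∈ s.erase i, |μ j| ≤ ∏ _j ∈ s.erase i, c :=
          prod_le_prod (fun j _ => abs_nonneg _) fun j _ => hμ j
      _ = c ^ (s.erase i).card := prod_const c
      _ ≤ c ^ Fintype.card ι := pow_le_pow_right₀ hc (card_le_univ _)
  have : 1 ≤ |μ i| * c ^ Fintype.card ι :=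
    calc 1 ≤ ∏ j ∈ s, |μ j| := hprod
      _ = |μ i| * ∏ j ∈ s.erase i, |μ j| := (mul_prod_erase s _ hi).symm
      _ ≤ |μ i| * c ^ Fintype.card ι := mul_le_mul_of_nonneg_left hrest (abs_nonneg _)
  rwa [zpow_neg, zpow_natCast, inv_le_iff_one_le_mul₀ (by positivity)]

theorem stmt_0_general (N : ℕ) (B : ℤ) (M : Matrix (Fin N) (Fin N) ℤ)
    (hB : ∀ i j, |M i j| ≤ B)
    (hM : (M.map (Int.cast : ℤ → ℝ)).IsHermitian) :
    ∀ i, hM.eigenvalues i ≠ 0 →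
      ((B : ℝ) * (N : ℝ)) ^ (-(N : ℤ)) ≤ |hM.eigenvalues i| := by
  intro i hi
  have hbound : ∀ j, |hM.eigenvalues j| ≤ B * N := fun j => by
    have := Matrix.norm_le_card_mul_of_mem_spectrum (b := B) (fun k l => by
      simpa [← Int.cast_abs] using hB k l) (hM.eigenvalues_mem_spectrum_real j)
    simpa [mul_comm] using this
  have hBN : (1 : ℝ) ≤ B * N := by
    have hpos : (0 : ℝ) < ((B * N : ℤ) : ℝ) := by
      push_cast
      exact (abs_pos.mpr hi).trans_le (hbound i)
    exact_mod_cast Int.cast_pos.mp hpos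
  have hprod := one_le_prod_abs_of_prod_X_sub_C_eq_map M.charpoly
    (by rw [← Matrix.charpoly_map, Int.coe_castRingHom, hM.charpoly_eq])
  simpa using le_abs_of_one_le_prod_abs hBN hbound hprod (mem_filter.mpr ⟨mem_univ i, hi⟩)

/-- A symmetric N×N integer matrix with entries bounded by B in absolute value
has every nonzero eigenvalue of absolute value at least (B·N)^(−N). -/
theorem stmt_0 (N : ℕ) (B : ℤ) (M : Matrix (Fin N) (Fin N) ℤ)
    (hsym : M.IsSymm) (hB : ∀ i j, |M i j| ≤ B)
    (hM : (M.map (Int.cast : ℤ → ℝ)).IsHermitian) :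
    ∀ i, hM.eigenvalues i ≠ 0 →
      ((B : ℝ) * (N : ℝ)) ^ (-(N : ℤ)) ≤ |hM.eigenvalues i| :=
  stmt_0_general N B M hB hM
end

section
/- Let M be a real symmetric positive semidefinite matrix written in block form as M = [[A, A C^T],[C A, C A C^T]] where A is a full-rank principal submatrix. Then every nonzero eigenvalue of M is at least the least nonzero eigenvalue of A. -/
/-!
Write `M = Pᵀ A P` with `P = [I, Cᵀ]`. If `M v = μ v` with `μ ≠ 0`, then `v = (x, C x)` lies in
the range of `Pᵀ`, and `w = P v = x + CᵀC x` satisfies `A w = μ x`. As `P Pᵀ = I + CᵀC ⪰ I`, we get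
`0 < x ⬝ w ≤ w ⬝ w`, so for `0 ≤ ρ ≤ λ_min(A)` (all eigenvalues of `A` are nonzero since `A` is
invertible) `ρ (x ⬝ w) ≤ ρ (w ⬝ w) ≤ w ⬝ A w = μ (x ⬝ w)`. Negative `ρ` are handled by `M ⪰ 0`.
-/

open Matrix
open scoped MatrixOrder

lemma Matrix.fromBlocks_mulVec_sum_elim_eq_smul_iff {m n R : Type*} [Fintype m] [Fintype n]
    [Semiring R] (A : Matrix m m R) (B : Matrix m n R) (C : Matrix n m R)
    (D : Matrix n n R) (x : m → R) (y : n → R) (μ : R) :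
    fromBlocks A B C D *ᵥ Sum.elim x y = μ • Sum.elim x y ↔
      A *ᵥ x + B *ᵥ y = μ • x ∧ C *ᵥ x + D *ᵥ y = μ • y := by
  simp only [fromBlocks_mulVec, funext_iff, Sum.forall, Sum.elim_inl, Sum.elim_inr, Pi.smul_apply,
    Sum.elim_comp_inl, Sum.elim_comp_inr]

namespace Matrix.IsHermitian

variable {n : Type*} [Fintype n] [DecidableEq n] {A : Matrix n n ℝ}

lemma mul_dotProduct_self_le_dotProduct_mulVec (hA : A.IsHermitian) {ρ : ℝ}
    (hρ : ∀ j, ρ ≤ hA.eigenvalues j) (u : n → ℝ) : ρ * (u ⬝ᵥ u) ≤ u ⬝ᵥ (A *ᵥ u) := by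
  have hpsd : (A - algebraMap ℝ _ ρ).PosSemidef := by
    rw [← nonneg_iff_posSemidef, sub_nonneg, algebraMap_le_iff_le_spectrum hA.isSelfAdjoint,
      hA.spectrum_real_eq_range_eigenvalues]
    rintro _ ⟨j, rfl⟩
    exact hρ j
  have := hpsd.dotProduct_mulVec_nonneg u
  rwa [Algebra.algebraMap_eq_smul_one, sub_mulVec, smul_mulVec, one_mulVec, dotProduct_sub,
    dotProduct_smul, smul_eq_mul, star_trivial, sub_nonneg] at this

lemma eigenvalues_ne_zero_of_det_ne_zero (hA : A.IsHermitian) (hdet : A.det ≠ 0) (j : n) :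
    hA.eigenvalues j ≠ 0 := by
  rw [hA.det_eq_prod_eigenvalues] at hdet
  exact_mod_cast Finset.prod_ne_zero_iff.mp hdet j (Finset.mem_univ j)

end Matrix.IsHermitian

namespace Matrix

variable {m n : Type*} [Fintype m] [Fintype n]

lemma le_of_mulVec_add_transpose_mulVec_eq_smul [DecidableEq m] {A : Matrix m m ℝ}
    (hA : A.IsHermitian) {ρ μ : ℝ} (hρ₀ : 0 ≤ ρ) (hρ : ∀ j, ρ ≤ hA.eigenvalues j)
    (C : Matrix n m ℝ) {x : m → ℝ} (hx : x ≠ 0) (h : A *ᵥ (x + Cᵀ *ᵥ (C *ᵥ x)) = μ • x) :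
    ρ ≤ μ := by
  set z := Cᵀ *ᵥ (C *ᵥ x)
  set w := x + z
  have hxz : 0 ≤ x ⬝ᵥ z := by
    rw [dotProduct_mulVec, vecMul_transpose]
    simpa using dotProduct_star_self_nonneg (C *ᵥ x)
  have hxw : 0 < x ⬝ᵥ w := by
    have hxx : 0 < x ⬝ᵥ x := by simpa using dotProduct_self_star_pos_iff.mpr hx
    rw [dotProduct_add]
    positivity
  have hww : x ⬝ᵥ w ≤ w ⬝ᵥ w := by
    have hzz : 0 ≤ z ⬝ᵥ z := by simpa using dotProduct_star_self_nonneg z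
    rw [add_dotProduct x z w, le_add_iff_nonneg_right, dotProduct_add, dotProduct_comm]
    positivity
  refine le_of_mul_le_mul_right ?_ hxw
  calc ρ * (x ⬝ᵥ w) ≤ ρ * (w ⬝ᵥ w) := mul_le_mul_of_nonneg_left hww hρ₀
    _ ≤ w ⬝ᵥ (A *ᵥ w) := hA.mul_dotProduct_self_le_dotProduct_mulVec hρ w
    _ = μ * (x ⬝ᵥ w) := by rw [h, dotProduct_smul, smul_eq_mul, dotProduct_comm]

lemma le_of_fromBlocks_mulVec_eq_smul [DecidableEq m] {A : Matrix m m ℝ} (hA : A.IsHermitian)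
    {ρ μ : ℝ} (hρ₀ : 0 ≤ ρ) (hρ : ∀ j, ρ ≤ hA.eigenvalues j) (C : Matrix n m ℝ)
    {v : m ⊕ n → ℝ} (hv : v ≠ 0) (hμ : μ ≠ 0)
    (h : fromBlocks A (A * Cᵀ) (C * A) (C * A * Cᵀ) *ᵥ v = μ • v) : ρ ≤ μ := by
  obtain ⟨x, y, rfl⟩ : ∃ x y, v = Sum.elim x y := ⟨_, _, (Sum.elim_comp_inl_inr v).symm⟩
  obtain ⟨htop, hbot⟩ := (fromBlocks_mulVec_sum_elim_eq_smul_iff ..).mp h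
  have hy : y = C *ᵥ x := by
    refine smul_right_injective _ hμ (?_ : μ • y = μ • (C *ᵥ x))
    rw [← hbot, ← mulVec_smul, ← htop, mulVec_add, mulVec_mulVec, mulVec_mulVec, Matrix.mul_assoc]
  have hx : x ≠ 0 := by
    rintro rfl
    rw [hy, mulVec_zero, Sum.elim_zero_zero] at hv
    exact hv rfl
  refine le_of_mulVec_add_transpose_mulVec_eq_smul hA hρ₀ hρ C hx ?_
  rw [← htop, hy, mulVec_add, mulVec_mulVec]

end Matrix

/-- If M = [[A, AC.transpose],[CA, CAC.transpose]] is symmetric PSD with A a full-rank symmetric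
principal block, then every nonzero eigenvalue of M is at least the least
(nonzero) eigenvalue of A. -/
theorem stmt_1 (m k : ℕ) (A : Matrix (Fin m) (Fin m) ℝ) (C : Matrix (Fin k) (Fin m) ℝ)
    (hA : A.IsHermitian) (hAfr : A.det ≠ 0)
    (hMpsd : (Matrix.fromBlocks A (A * C.transpose) (C * A) (C * A * C.transpose)).PosSemidef)
    (hM : (Matrix.fromBlocks A (A * C.transpose) (C * A) (C * A * C.transpose)).IsHermitian) :
    ∀ ρ : ℝ, (∀ j, hA.eigenvalues j ≠ 0 → ρ ≤ hA.eigenvalues j) →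
      ∀ i, hM.eigenvalues i ≠ 0 → ρ ≤ hM.eigenvalues i := by
  intro ρ hρ i hi
  rcases le_or_gt ρ 0 with hρ₀ | hρ₀
  · exact hρ₀.trans (hMpsd.eigenvalues_nonneg i)
  refine le_of_fromBlocks_mulVec_eq_smul hA hρ₀.le
    (fun j ↦ hρ j (hA.eigenvalues_ne_zero_of_det_ne_zero hAfr j)) C ?_ hi
    (hM.mulVec_eigenvectorBasis i)
  simpa using hM.eigenvectorBasis.orthonormal.ne_zero i
end

section
/- Every polynomial p ∈ ℝ[x₁,…,xₙ] that vanishes identically on the unit sphere {x : Σᵢ xᵢ² = 1} lies in the ideal generated by Σᵢ xᵢ² − 1. -/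
/-!
Write `x = (t, y)` with `t` the first coordinate. As a polynomial in `t` over `ℝ[y]`, the
sphere polynomial is the monic quadratic `t² + (|y|² - 1)`, so `p` is congruent modulo it to
`a(y) + b(y) t`. On the sphere this remainder vanishes; for `|y| < 1` both `t = ±√(1 - |y|²)`
occur, which forces `a(y) = b(y) = 0`. Polynomials vanishing on the open unit ball are zero,
so the remainder is zero.
-/

open MvPolynomial

theorem Polynomial.natDegree_modByMonic_X_sq_add_C_le_one {R : Type*} [CommRing R]
    [Nontrivial R] (p : Polynomial R) (c : R) : (p %ₘ (X ^ 2 + C c)).natDegree ≤ 1 := by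
  have hq : (X ^ 2 + C c : Polynomial R) ≠ 1 := fun h => by
    simpa [h] using (natDegree_X_pow_add_C (n := 2) (r := c))
  have := natDegree_modByMonic_lt p (monic_X_pow_add_C c two_ne_zero) hq
  rw [natDegree_X_pow_add_C] at this
  omega

namespace MvPolynomial

theorem eq_zero_of_eval_eq_zero_of_sum_sq_lt_one {σ : Type*} [Fintype σ]
    (p : MvPolynomial σ ℝ) (h : ∀ y : σ → ℝ, ∑ i, y i ^ 2 < 1 → eval y p = 0) : p = 0 := by
  -- the box `(0, δ)^σ` lies in the unit ball
  set δ : ℝ := 1 / (Fintype.card σ + 1)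
  have hδ : 0 < δ := by positivity
  have hδ1 : δ ≤ 1 := div_le_one_of_le₀ (by linarith) (by positivity)
  refine funext_set (fun _ => Set.Ioo 0 δ) (fun _ => Set.Ioo_infinite hδ) fun y hy => ?_
  rw [h y, map_zero]
  have hsq : ∀ i, y i ^ 2 ≤ δ := fun i => by
    obtain ⟨h0, hδi⟩ := hy i trivial
    nlinarith
  calc ∑ i, y i ^ 2 ≤ ∑ _i : σ, δ := Finset.sum_le_sum fun i _ => hsq i
    _ = Fintype.card σ / (Fintype.card σ + 1) := by
      rw [Finset.sum_const, Finset.card_univ, nsmul_eq_mul, mul_one_div]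
    _ < 1 := (div_lt_one (by positivity)).2 (by linarith)

variable {R : Type*} [CommRing R] {m : ℕ}

theorem finSuccEquiv_sum_X_sq_sub_one :
    finSuccEquiv R m (∑ i, X i ^ 2 - 1) =
      Polynomial.X ^ 2 + Polynomial.C (∑ i, X i ^ 2 - 1) := by
  rw [Fin.sum_univ_succ]
  simp only [map_sub, map_add, map_sum, map_one, map_pow, finSuccEquiv_X_zero, finSuccEquiv_X_succ]
  ring

theorem eval₂_modByMonic_finSuccEquiv_of_sq_add_sum_sq_eq_one
    (p : MvPolynomial (Fin (m + 1)) R) {y : Fin m → R} {t : R}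
    (hyt : t ^ 2 + ∑ i, y i ^ 2 = 1) :
    (finSuccEquiv R m p %ₘ (Polynomial.X ^ 2 + Polynomial.C (∑ i, X i ^ 2 - 1))).eval₂
      (eval y) t = eval (Fin.cons t y) p := by
  rw [eval_eq_eval_mv_eval', Polynomial.eval_map]
  refine Polynomial.eval₂_modByMonic_eq_self_of_root ?_
  rw [Polynomial.eval₂_add, Polynomial.eval₂_X_pow, Polynomial.eval₂_C]
  simp only [map_sub, map_sum, map_pow, eval_X, map_one]
  linear_combination hyt

end MvPolynomial

theorem stmt_8_general (n : ℕ) (p : MvPolynomial (Fin n) ℝ)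
    (hvan : ∀ x : Fin n → ℝ, ∑ i, x i ^ 2 = 1 → eval x p = 0) :
    p ∈ Ideal.span {(∑ i, X i ^ 2 - 1 : MvPolynomial (Fin n) ℝ)} := by
  cases n with
  | zero => simp [Ideal.span_singleton_neg]
  | succ m =>
    rw [Ideal.mem_span_singleton, ← map_dvd_iff (finSuccEquiv ℝ m), finSuccEquiv_sum_X_sq_sub_one,
      ← Polynomial.modByMonic_eq_zero_iff_dvd (Polynomial.monic_X_pow_add_C _ two_ne_zero)]
    set r := finSuccEquiv ℝ m p %ₘ (Polynomial.X ^ 2 + Polynomial.C (∑ i, X i ^ 2 - 1))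
    have hr : r = Polynomial.C (r.coeff 1) * Polynomial.X + Polynomial.C (r.coeff 0) :=
      Polynomial.eq_X_add_C_of_natDegree_le_one
        (Polynomial.natDegree_modByMonic_X_sq_add_C_le_one _ _)
    have hsphere : ∀ (y : Fin m → ℝ) (t : ℝ), t ^ 2 + ∑ i, y i ^ 2 = 1 →
        eval y (r.coeff 1) * t + eval y (r.coeff 0) = 0 := fun y t hyt => by
      have : r.eval₂ (eval y) t = eval (Fin.cons t y) p :=
        eval₂_modByMonic_finSuccEquiv_of_sq_add_sum_sq_eq_one p hyt
      rw [hvan _ (by simpa [Fin.sum_univ_succ] using hyt), hr] at this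
      simpa using this
    have hball : ∀ y : Fin m → ℝ, ∑ i, y i ^ 2 < 1 →
        eval y (r.coeff 0) = 0 ∧ eval y (r.coeff 1) = 0 := fun y hy => by
      set t := √(1 - ∑ i, y i ^ 2)
      have ht : 0 < t := Real.sqrt_pos.2 (by linarith)
      have ht2 : t ^ 2 = 1 - ∑ i, y i ^ 2 := Real.sq_sqrt (by linarith)
      have hplus := hsphere y t (by linarith)
      have hminus := hsphere y (-t) (by rw [neg_sq]; linarith)
      refine ⟨by linarith, ?_⟩
      exact (mul_eq_zero.1 (by linarith : eval y (r.coeff 1) * t = 0)).resolve_right ht.ne'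
    rw [hr, eq_zero_of_eval_eq_zero_of_sum_sq_lt_one _ fun y hy => (hball y hy).1,
      eq_zero_of_eval_eq_zero_of_sum_sq_lt_one _ fun y hy => (hball y hy).2]
    simp

/-- Every polynomial vanishing identically on the unit sphere lies in the ideal
generated by Σᵢ xᵢ² − 1. -/
theorem stmt_8 (n : ℕ) (hn : 1 ≤ n) (p : MvPolynomial (Fin n) ℝ)
    (hvan : ∀ x : Fin n → ℝ, ∑ i, x i ^ 2 = 1 → eval x p = 0) :
    p ∈ Ideal.span {(∑ i, X i ^ 2 - 1 : MvPolynomial (Fin n) ℝ)} :=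
  stmt_8_general n p hvan
end

section
/- Let S(n) ⊆ {0,1}^{2n} be the set of Boolean strings with exactly n ones. For any d ≤ n, every polynomial of degree d that vanishes on S(n) lies in the ideal generated by {xᵢ² − xᵢ : i ∈ [2n]} ∪ {Σᵢ xᵢ − n}, with a derivation in which every term has degree at most d. -/
/-!
Reducing `p` modulo the `xᵢ² - xᵢ` leaves a multilinear polynomial `∑ c S ∏_{i ∈ S} xᵢ` of
degree `≤ d`, and vanishing on the slice says `∑_{S ⊆ T} c S = 0` for every `n`-set `T`.
Multiplying a multilinear `∑ r S ∏_{i ∈ S} xᵢ` by `∑ xᵢ - n` and reducing again gives the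
coefficients `up r + (|S| - n) r`, where `up r T = ∑_{i ∈ T} r (T \ {i})`. The equation
`c = up r + (|S| - n) r` is solved for `r` level by level below `d`, as `|S| - n ≠ 0` there.
The defect left on level `d` sums to zero over the subsets of every `n`-set, and such a function
on a level `ℓ ≤ n` vanishes: `up` is injective on levels `2ℓ < 2n`, because
`down ∘ up = up ∘ down + (2n - 2ℓ)` gives `‖up f‖² ≥ (2n - 2ℓ) ‖f‖²`.
-/

open MvPolynomial Finset

namespace MaxBisection

section SetFunctions

variable {σ : Type*} [DecidableEq σ]

def up {M : Type*} [AddCommMonoid M] (f : Finset σ → M) (T : Finset σ) : M :=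
  ∑ i ∈ T, f (T.erase i)

def IsLevel {M : Type*} [Zero M] (f : Finset σ → M) (ℓ : ℕ) : Prop :=
  ∀ S : Finset σ, S.card ≠ ℓ → f S = 0

theorem isLevel_up {M : Type*} [AddCommMonoid M] {f : Finset σ → M} {ℓ : ℕ}
    (hf : IsLevel f ℓ) : IsLevel (up f) (ℓ + 1) := fun T hT =>
  sum_eq_zero fun i hi => hf _ (by have := card_pos.2 ⟨i, hi⟩; rw [card_erase_of_mem hi]; omega)

noncomputable def upSolve {𝕜 : Type*} [Field 𝕜] (n d : ℕ) (c : Finset σ → 𝕜) (S : Finset σ) :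
    𝕜 :=
  if S.card < d then
    (c S - ∑ i ∈ S.attach, upSolve n d c (S.erase i)) / ((S.card : 𝕜) - n)
  else 0
termination_by S.card
decreasing_by exact card_erase_lt_of_mem i.2

theorem upSolve_of_le {𝕜 : Type*} [Field 𝕜] {n d : ℕ} (c : Finset σ → 𝕜) {S : Finset σ}
    (hS : d ≤ S.card) : upSolve n d c S = 0 := by
  rw [upSolve, if_neg (by omega)]

theorem eq_up_upSolve_add {𝕜 : Type*} [Field 𝕜] [CharZero 𝕜] {n d : ℕ} (hd : d ≤ n)
    (c : Finset σ → 𝕜) {S : Finset σ} (hS : S.card < d) :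
    c S = up (upSolve n d c) S + ((S.card : 𝕜) - n) * upSolve n d c S := by
  have hne : (S.card : 𝕜) - n ≠ 0 := sub_ne_zero.2 (by exact_mod_cast (by omega : S.card ≠ n))
  rw [upSolve, if_pos hS, up, ← sum_attach S, mul_div_cancel₀ _ hne]
  ring

variable [Fintype σ]

def down {M : Type*} [AddCommMonoid M] (f : Finset σ → M) (S : Finset σ) : M :=
  ∑ i ∈ Sᶜ, f (insert i S)

theorem sum_sum_erase_eq_sum_sum_insert {M : Type*} [AddCommMonoid M]
    (A : Finset (Finset σ)) (F : Finset σ → σ → M) :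
    ∑ T ∈ A, ∑ i ∈ T, F (T.erase i) i = ∑ S, ∑ i ∈ Sᶜ with insert i S ∈ A, F S i := by
  rw [sum_sigma', sum_sigma']
  refine sum_nbij' (fun x => ⟨x.1.erase x.2, x.2⟩) (fun x => ⟨insert x.2 x.1, x.2⟩)
    ?_ ?_ ?_ ?_ fun _ _ => rfl
  · rintro ⟨T, i⟩ hx
    simp only [mem_sigma, mem_filter, mem_compl] at hx ⊢
    exact ⟨mem_univ _, notMem_erase _ _, by rw [insert_erase hx.2]; exact hx.1⟩
  · rintro ⟨S, i⟩ hx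
    simp only [mem_sigma, mem_filter, mem_compl, mem_univ, true_and] at hx ⊢
    exact ⟨hx.2, mem_insert_self _ _⟩
  · rintro ⟨T, i⟩ hx
    simp [insert_erase (mem_sigma.1 hx).2]
  · rintro ⟨S, i⟩ hx
    simp [erase_insert (mem_compl.1 (mem_filter.1 (mem_sigma.1 hx).2).1)]

variable {R : Type*} [CommRing R]

theorem sum_up_mul (f g : Finset σ → R) : ∑ T, up f T * g T = ∑ S, f S * down g S := by
  have h : ∀ T : Finset σ, up f T * g T = ∑ i ∈ T, f (T.erase i) * g (insert i (T.erase i)) :=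
    fun T => by
      rw [up, sum_mul]
      exact sum_congr rfl fun i hi => by rw [insert_erase hi]
  simp_rw [h, sum_sum_erase_eq_sum_sum_insert univ fun S i => f S * g (insert i S),
    mem_univ, filter_true, down, mul_sum]

theorem down_up (f : Finset σ → R) (S : Finset σ) :
    down (up f) S = up (down f) S + ((Sᶜ.card : R) - S.card) * f S := by
  have hdu : down (up f) S = ∑ i ∈ Sᶜ, (f S + ∑ j ∈ S, f (insert i (S.erase j))) := by
    refine sum_congr rfl fun i hi => ?_
    rw [mem_compl] at hi
    rw [up, sum_insert hi, erase_insert hi]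
    congr 1
    exact sum_congr rfl fun j hj => by rw [erase_insert_of_ne (by rintro rfl; exact hi hj)]
  have hud : up (down f) S = ∑ j ∈ S, (f S + ∑ i ∈ Sᶜ, f (insert i (S.erase j))) := by
    refine sum_congr rfl fun j hj => ?_
    have hc : (S.erase j)ᶜ = insert j Sᶜ := by
      ext x
      by_cases hx : x = j <;> simp [hx, hj]
    rw [down, hc, sum_insert (by simp [hj]), insert_erase hj]
  rw [hdu, hud, sum_add_distrib, sum_add_distrib, sum_const, sum_const, sum_comm]
  simp only [nsmul_eq_mul]
  ring

theorem sum_powerset_up (f : Finset σ → R) (T : Finset σ) :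
    ∑ S ∈ T.powerset, up f S = ∑ S ∈ T.powerset, ((T.card : R) - S.card) * f S := by
  simp only [up]
  rw [sum_sum_erase_eq_sum_sum_insert T.powerset fun S _ => f S,
    ← sum_subset (subset_univ T.powerset)]
  · refine sum_congr rfl fun S hS => ?_
    have hST := mem_powerset.1 hS
    have hfil : Sᶜ.filter (fun i => insert i S ∈ T.powerset) = T \ S := by
      ext i
      simp only [mem_filter, mem_compl, mem_powerset, insert_subset_iff, mem_sdiff]
      tauto
    rw [hfil, sum_const, card_sdiff_of_subset hST, nsmul_eq_mul, Nat.cast_sub (card_le_card hST)]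
  · intro S _ hS
    refine sum_eq_zero fun i hi => absurd ?_ hS
    exact mem_powerset.2 ((subset_insert i S).trans (mem_powerset.1 (mem_filter.1 hi).2))

variable {𝕜 : Type*} [Field 𝕜] [LinearOrder 𝕜] [IsStrictOrderedRing 𝕜]

theorem IsLevel.eq_zero_of_up_eq_zero {f : Finset σ → 𝕜} {ℓ : ℕ}
    (hf : IsLevel f ℓ) (hℓ : 2 * ℓ < Fintype.card σ) (hup : up f = 0) : f = 0 := by
  have hgap : ∀ S : Finset σ,
      ((Sᶜ.card : 𝕜) - S.card) * f S ^ 2 = (Fintype.card σ - 2 * ℓ : ℕ) * f S ^ 2 := by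
    intro S
    by_cases hS : S.card = ℓ
    · rw [card_compl, hS, Nat.cast_sub (by omega), Nat.cast_sub (by omega)]
      push_cast
      ring
    · simp [hf S hS]
  have hnorm : ∑ S, up f S * up f S
      = ∑ S, down f S * down f S + ((Fintype.card σ - 2 * ℓ : ℕ) : 𝕜) * ∑ S, f S ^ 2 :=
    calc ∑ S, up f S * up f S = ∑ S, f S * down (up f) S := sum_up_mul f (up f)
      _ = ∑ S, (up (down f) S * f S + ((Sᶜ.card : 𝕜) - S.card) * f S ^ 2) :=
        sum_congr rfl fun S _ => by rw [down_up]; ring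
      _ = _ := by rw [sum_add_distrib, sum_up_mul, sum_congr rfl fun S _ => hgap S, mul_sum]
  simp only [hup, Pi.zero_apply, mul_zero, sum_const_zero] at hnorm
  have hpos : (0 : 𝕜) < (Fintype.card σ - 2 * ℓ : ℕ) := by exact_mod_cast Nat.sub_pos_of_lt hℓ
  have hsq : ∑ S, f S ^ 2 = 0 := by
    have := sum_nonneg fun S (_ : S ∈ univ) => mul_self_nonneg (down f S)
    have := sum_nonneg fun S (_ : S ∈ univ) => sq_nonneg (f S)
    nlinarith
  funext S
  exact pow_eq_zero_iff two_ne_zero |>.1 <|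
    (sum_eq_zero_iff_of_nonneg fun S _ => sq_nonneg (f S)).1 hsq S (mem_univ S)

theorem IsLevel.eq_zero_of_sum_powerset_eq_zero {f : Finset σ → 𝕜} {ℓ m : ℕ}
    (hf : IsLevel f ℓ) (hℓm : ℓ ≤ m) (hm : 2 * m ≤ Fintype.card σ)
    (hsum : ∀ T : Finset σ, T.card = m → ∑ S ∈ T.powerset, f S = 0) : f = 0 := by
  induction hk : m - ℓ generalizing ℓ f with
  | zero =>
    funext S
    by_cases hS : S.card = ℓ
    · rw [Pi.zero_apply, ← hsum S (by omega), sum_eq_single_of_mem S (mem_powerset_self S)]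
      exact fun S' hS' hne => hf S' fun h' =>
        hne (eq_of_subset_of_card_le (mem_powerset.1 hS') (by omega))
    · exact hf S hS
  | succ k ih =>
    refine IsLevel.eq_zero_of_up_eq_zero hf (by omega) (ih (isLevel_up hf) (by omega) ?_ (by omega))
    intro T hT
    have hlevel : ∀ S ∈ T.powerset, ((m : 𝕜) - S.card) * f S = (m - ℓ) * f S := by
      intro S _
      by_cases hS : S.card = ℓ
      · rw [hS]
      · rw [hf S hS, mul_zero, mul_zero]
    rw [sum_powerset_up, hT, sum_congr rfl hlevel, ← mul_sum, hsum T hT, mul_zero]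

theorem exists_eq_up_add_mul {n d : ℕ} (hd : d ≤ n) (hn : 2 * n ≤ Fintype.card σ)
    {c : Finset σ → 𝕜} (hc : ∀ S : Finset σ, d < S.card → c S = 0)
    (hvan : ∀ T : Finset σ, T.card = n → ∑ S ∈ T.powerset, c S = 0) :
    ∃ r : Finset σ → 𝕜, (∀ S : Finset σ, d ≤ S.card → r S = 0) ∧
      ∀ S, c S = up r S + ((S.card : 𝕜) - n) * r S := by
  set r := upSolve n d c
  have hr : ∀ S : Finset σ, d ≤ S.card → r S = 0 := fun S hS => upSolve_of_le c hS
  set δ : Finset σ → 𝕜 := fun S => c S - (up r S + ((S.card : 𝕜) - n) * r S)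
  have hδ : IsLevel δ d := by
    intro S hS
    rcases Nat.lt_or_gt_of_ne hS with hlt | hgt
    · exact sub_eq_zero.2 (eq_up_upSolve_add hd c hlt)
    · have hup : up r S = 0 := sum_eq_zero fun i hi =>
        hr _ (by rw [card_erase_of_mem hi]; omega)
      simp only [δ, hc S hgt, hup, hr S hgt.le, mul_zero, add_zero, sub_zero]
  have hδsum : ∀ T : Finset σ, T.card = n → ∑ S ∈ T.powerset, δ S = 0 := by
    intro T hT
    simp only [δ]
    rw [sum_sub_distrib, hvan T hT, sum_add_distrib, sum_powerset_up, hT, ← sum_add_distrib,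
      zero_sub, neg_eq_zero]
    exact sum_eq_zero fun S _ => by ring
  have hδ0 := hδ.eq_zero_of_sum_powerset_eq_zero hd hn hδsum
  exact ⟨r, hr, fun S => sub_eq_zero.1 (congrFun hδ0 S)⟩

end SetFunctions

section Polynomials

variable {σ R : Type*} [CommRing R]

theorem totalDegree_X_pow_le (i : σ) (k : ℕ) : (X i ^ k : MvPolynomial σ R).totalDegree ≤ k := by
  rw [X_pow_eq_monomial]
  exact (totalDegree_monomial_le _ _).trans (by simp)

theorem totalDegree_X_le (i : σ) : (X i : MvPolynomial σ R).totalDegree ≤ 1 := by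
  simpa using totalDegree_X_pow_le (R := R) i 1

theorem totalDegree_prod_X_le (S : Finset σ) :
    (∏ i ∈ S, X i : MvPolynomial σ R).totalDegree ≤ S.card := by
  refine (totalDegree_finsetProd _ _).trans ?_
  exact (sum_le_sum fun i (_ : i ∈ S) => totalDegree_X_le (R := R) i).trans (by simp)

def multilinearCoeff [DecidableEq σ] (p : MvPolynomial σ R) (S : Finset σ) : R :=
  ∑ e ∈ p.support with e.support = S, p.coeff e

theorem multilinearCoeff_eq_zero [DecidableEq σ] {p : MvPolynomial σ R} {S : Finset σ}
    (hS : p.totalDegree < S.card) : multilinearCoeff p S = 0 := by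
  refine sum_eq_zero fun e he => absurd hS (not_lt.2 ?_)
  rw [← (mem_filter.1 he).2]
  calc e.support.card = ∑ i ∈ e.support, 1 := by simp
    _ ≤ ∑ i ∈ e.support, e i := sum_le_sum fun i hi =>
      Nat.one_le_iff_ne_zero.2 (Finsupp.mem_support_iff.1 hi)
    _ ≤ p.totalDegree := le_totalDegree (mem_filter.1 he).1

variable [Fintype σ]

theorem totalDegree_sum_X_sub_C_le (a : R) : (∑ i, X i - C a : MvPolynomial σ R).totalDegree ≤ 1 :=
  (totalDegree_sub_C_le _ _).trans
    ((totalDegree_finsetSum _ _).trans (Finset.sup_le fun i _ => totalDegree_X_le i))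

def IsBooleanDerivable (d : ℕ) (q : MvPolynomial σ R) : Prop :=
  ∃ lam : σ → MvPolynomial σ R, q = ∑ i, lam i * (X i ^ 2 - X i) ∧
    ∀ i, (lam i * (X i ^ 2 - X i)).totalDegree ≤ d

namespace IsBooleanDerivable

variable {d e : ℕ} {q q' : MvPolynomial σ R}

theorem zero : IsBooleanDerivable d (0 : MvPolynomial σ R) := ⟨0, by simp, by simp⟩

theorem mono (h : IsBooleanDerivable d q) (hde : d ≤ e) : IsBooleanDerivable e q :=
  let ⟨lam, hq, hlam⟩ := h
  ⟨lam, hq, fun i => (hlam i).trans hde⟩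

theorem add (h : IsBooleanDerivable d q) (h' : IsBooleanDerivable d q') :
    IsBooleanDerivable d (q + q') := by
  obtain ⟨lam, rfl, hlam⟩ := h
  obtain ⟨lam', rfl, hlam'⟩ := h'
  refine ⟨lam + lam', by simp only [Pi.add_apply, add_mul, sum_add_distrib], fun i => ?_⟩
  rw [Pi.add_apply, add_mul]
  exact (totalDegree_add _ _).trans (max_le (hlam i) (hlam' i))

theorem neg (h : IsBooleanDerivable d q) : IsBooleanDerivable d (-q) := by
  obtain ⟨lam, rfl, hlam⟩ := h
  refine ⟨-lam, by simp only [Pi.neg_apply, neg_mul, sum_neg_distrib], fun i => ?_⟩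
  rw [Pi.neg_apply, neg_mul, totalDegree_neg]
  exact hlam i

theorem sub (h : IsBooleanDerivable d q) (h' : IsBooleanDerivable d q') :
    IsBooleanDerivable d (q - q') :=
  sub_eq_add_neg q q' ▸ h.add h'.neg

theorem sum {ι : Type*} {s : Finset ι} {f : ι → MvPolynomial σ R}
    (h : ∀ j ∈ s, IsBooleanDerivable d (f j)) : IsBooleanDerivable d (∑ j ∈ s, f j) :=
  Finset.sum_induction _ _ (fun _ _ => add) zero h

theorem mul_left (h : IsBooleanDerivable d q) (t : MvPolynomial σ R) :
    IsBooleanDerivable (t.totalDegree + d) (t * q) := by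
  obtain ⟨lam, rfl, hlam⟩ := h
  refine ⟨fun i => t * lam i, by simp only [mul_sum, mul_assoc], fun i => ?_⟩
  rw [mul_assoc]
  exact (totalDegree_mul _ _).trans (Nat.add_le_add_left (hlam i) _)

theorem mul_X_sq_sub_X [DecidableEq σ] (g : MvPolynomial σ R) (i : σ) :
    IsBooleanDerivable (g * (X i ^ 2 - X i)).totalDegree (g * (X i ^ 2 - X i)) := by
  refine ⟨Pi.single i g, ?_, fun j => ?_⟩
  · rw [sum_eq_single i (fun j _ hj => by rw [Pi.single_eq_of_ne hj, zero_mul])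
      (fun h => absurd (mem_univ i) h), Pi.single_eq_same]
  · by_cases hj : j = i
    · subst hj; rw [Pi.single_eq_same]
    · simp [Pi.single_eq_of_ne hj]

theorem eval_eq_zero (h : IsBooleanDerivable d q) {x : σ → R} (hx : ∀ i, x i = 0 ∨ x i = 1) :
    eval x q = 0 := by
  obtain ⟨lam, rfl, -⟩ := h
  refine (map_sum _ _ _).trans (sum_eq_zero fun i _ => ?_)
  rcases hx i with h | h <;> simp [h]

end IsBooleanDerivable

theorem isBooleanDerivable_X_pow_sub_X [DecidableEq σ] (i : σ) {k : ℕ} (hk : k ≠ 0) :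
    IsBooleanDerivable k (X i ^ k - X i : MvPolynomial σ R) := by
  obtain ⟨m, rfl⟩ := Nat.exists_eq_succ_of_ne_zero hk
  have hfactor : (∑ j ∈ range m, X i ^ j) * (X i ^ 2 - X i)
      = (X i ^ (m + 1) - X i : MvPolynomial σ R) := by
    rw [show (X i ^ 2 - X i : MvPolynomial σ R) = (X i - 1) * X i by ring, ← mul_assoc,
      geom_sum_mul]
    ring
  have h := IsBooleanDerivable.mul_X_sq_sub_X (∑ j ∈ range m, (X i : MvPolynomial σ R) ^ j) i
  rw [hfactor] at h
  exact h.mono <| (totalDegree_sub _ _).trans <|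
    max_le (totalDegree_X_pow_le i _) ((totalDegree_X_le i).trans (by omega))

theorem isBooleanDerivable_prod_X_pow_sub_prod_X [DecidableEq σ] (s : Finset σ) {k : σ → ℕ}
    (hk : ∀ i ∈ s, k i ≠ 0) :
    IsBooleanDerivable (∑ i ∈ s, k i) (∏ i ∈ s, X i ^ k i - ∏ i ∈ s, X i : MvPolynomial σ R) := by
  induction s using Finset.induction_on with
  | empty => simpa using IsBooleanDerivable.zero
  | insert a s ha ih =>
    have hsplit : ∏ i ∈ insert a s, X i ^ k i - ∏ i ∈ insert a s, (X i : MvPolynomial σ R)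
        = X a ^ k a * (∏ i ∈ s, X i ^ k i - ∏ i ∈ s, X i)
          + (∏ i ∈ s, X i) * (X a ^ k a - X a) := by
      rw [prod_insert ha, prod_insert ha]
      ring
    have hks : s.card ≤ ∑ i ∈ s, k i := by
      simpa using sum_le_sum fun i hi => Nat.one_le_iff_ne_zero.2 (hk i (mem_insert_of_mem hi))
    rw [hsplit, sum_insert ha]
    refine IsBooleanDerivable.add ?_ ?_
    · refine ((ih fun i hi => hk i (mem_insert_of_mem hi)).mul_left _).mono ?_
      exact Nat.add_le_add_right (totalDegree_X_pow_le a _) _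
    · refine ((isBooleanDerivable_X_pow_sub_X a (hk a (mem_insert_self a s))).mul_left _).mono ?_
      have := totalDegree_prod_X_le (R := R) s
      omega

theorem isBooleanDerivable_monomial_sub_prod_X [DecidableEq σ] (e : σ →₀ ℕ) :
    IsBooleanDerivable e.degree (monomial e 1 - ∏ i ∈ e.support, X i : MvPolynomial σ R) := by
  rw [monomial_eq, C_1, one_mul, Finsupp.prod, Finsupp.degree_apply]
  exact isBooleanDerivable_prod_X_pow_sub_prod_X _ fun i hi => Finsupp.mem_support_iff.1 hi

noncomputable def multilinear (c : Finset σ → R) : MvPolynomial σ R := ∑ S, C (c S) * ∏ i ∈ S, X i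

theorem multilinear_multilinearCoeff [DecidableEq σ] (p : MvPolynomial σ R) :
    multilinear (multilinearCoeff p) = ∑ e ∈ p.support, C (p.coeff e) * ∏ i ∈ e.support, X i := by
  rw [multilinear, ← sum_fiberwise p.support Finsupp.support]
  refine sum_congr rfl fun S _ => ?_
  rw [multilinearCoeff, map_sum, sum_mul]
  exact sum_congr rfl fun e he => by rw [(mem_filter.1 he).2]

theorem isBooleanDerivable_sub_multilinear [DecidableEq σ] (p : MvPolynomial σ R) :
    IsBooleanDerivable p.totalDegree (p - multilinear (multilinearCoeff p)) := by
  have h : IsBooleanDerivable p.totalDegree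
      (∑ e ∈ p.support, (monomial e (p.coeff e) - C (p.coeff e) * ∏ i ∈ e.support, X i)) := by
    refine IsBooleanDerivable.sum fun e he => ?_
    rw [show monomial e (p.coeff e) = C (p.coeff e) * monomial e 1 by
      rw [C_mul_monomial, mul_one], ← mul_sub]
    exact ((isBooleanDerivable_monomial_sub_prod_X e).mul_left (C (p.coeff e))).mono
      (by rw [totalDegree_C, zero_add]; exact le_totalDegree he)
  rwa [sum_sub_distrib, ← p.as_sum, ← multilinear_multilinearCoeff] at h

theorem eval_indicator_multilinear [DecidableEq σ] (c : Finset σ → R) (T : Finset σ) :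
    eval (fun i => if i ∈ T then 1 else 0) (multilinear c) = ∑ S ∈ T.powerset, c S := by
  simp only [multilinear, map_sum, map_mul, eval_C, eval_prod, eval_X, prod_boole, mul_ite,
    mul_one, mul_zero]
  rw [← sum_filter]
  congr 1
  ext S
  simp [subset_iff]

theorem totalDegree_multilinear_mul_le {c : Finset σ → R} {q : MvPolynomial σ R} {b : ℕ}
    (h : ∀ S : Finset σ, c S ≠ 0 → S.card + q.totalDegree ≤ b) :
    (multilinear c * q).totalDegree ≤ b := by
  rw [multilinear, sum_mul]
  refine (totalDegree_finsetSum _ _).trans (Finset.sup_le fun S _ => ?_)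
  by_cases hS : c S = 0
  · simp [hS]
  · calc ((C (c S) * ∏ i ∈ S, X i) * q).totalDegree
        ≤ (C (c S)).totalDegree + ((∏ i ∈ S, X i).totalDegree + q.totalDegree) := by
          rw [mul_assoc]
          exact (totalDegree_mul _ _).trans (Nat.add_le_add_left (totalDegree_mul _ _) _)
      _ ≤ b := by
          rw [totalDegree_C, zero_add]
          exact (Nat.add_le_add_right (totalDegree_prod_X_le S) _).trans (h S hS)

theorem isBooleanDerivable_prod_X_mul_sum_X_sub_C [DecidableEq σ] (S : Finset σ) (a : R) :
    IsBooleanDerivable (S.card + 1) ((∏ i ∈ S, X i) * (∑ i, X i - C a)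
      - (C ((S.card : R) - a) * ∏ i ∈ S, X i + ∑ i ∈ Sᶜ, ∏ j ∈ insert i S, X j)) := by
  set P : MvPolynomial σ R := ∏ i ∈ S, X i with hP
  have hin : ∀ i ∈ S, P * X i - P = (∏ j ∈ S.erase i, X j) * (X i ^ 2 - X i) := fun i hi => by
    rw [hP, ← mul_prod_erase S X hi]
    ring
  have hout : ∀ i ∈ Sᶜ, ∏ j ∈ insert i S, X j = P * X i := fun i hi => by
    rw [prod_insert (mem_compl.1 hi), mul_comm]
  have hkey : P * (∑ i, X i - C a) - (C ((S.card : R) - a) * P + ∑ i ∈ Sᶜ, ∏ j ∈ insert i S, X j)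
      = ∑ i ∈ S, (∏ j ∈ S.erase i, X j) * (X i ^ 2 - X i) := by
    rw [← sum_congr rfl hin, sum_congr rfl hout, ← sum_add_sum_compl S, sum_sub_distrib, sum_const,
      map_sub, map_natCast, ← mul_sum, ← mul_sum, nsmul_eq_mul]
    ring
  rw [hkey]
  refine IsBooleanDerivable.sum fun i hi => (IsBooleanDerivable.mul_X_sq_sub_X _ i).mono ?_
  have hprod := totalDegree_prod_X_le (R := R) (S.erase i)
  have hsq : (X i ^ 2 - X i : MvPolynomial σ R).totalDegree ≤ 2 :=
    (totalDegree_sub _ _).trans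
      (max_le (totalDegree_X_pow_le i 2) ((totalDegree_X_le i).trans (by omega)))
  rw [card_erase_of_mem hi] at hprod
  have := card_pos.2 ⟨i, hi⟩
  exact (totalDegree_mul _ _).trans (by omega)

theorem isBooleanDerivable_multilinear_mul_sum_X_sub_C [DecidableEq σ] (a : R) {d : ℕ}
    {r : Finset σ → R} (hr : ∀ S : Finset σ, d ≤ S.card → r S = 0) :
    IsBooleanDerivable d (multilinear r * (∑ i, X i - C a)
      - multilinear fun S => up r S + ((S.card : R) - a) * r S) := by
  have hup : multilinear (up r) = ∑ S, C (r S) * ∑ i ∈ Sᶜ, ∏ j ∈ insert i S, X j := by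
    have := sum_sum_erase_eq_sum_sum_insert univ fun S i => C (r S) * ∏ j ∈ insert i S, X j
    simp only [mem_univ, filter_true] at this
    simp only [multilinear, up, map_sum, sum_mul, mul_sum, ← this]
    exact sum_congr rfl fun T _ => sum_congr rfl fun i hi => by rw [insert_erase hi]
  have hsplit : multilinear (fun S => up r S + ((S.card : R) - a) * r S)
      = ∑ S, C (r S) * (C ((S.card : R) - a) * ∏ i ∈ S, X i + ∑ i ∈ Sᶜ, ∏ j ∈ insert i S, X j) := by
    simp only [multilinear, map_add, map_mul, add_mul, sum_add_distrib]
    rw [← multilinear, hup, ← sum_add_distrib]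
    exact sum_congr rfl fun S _ => by ring
  rw [hsplit, multilinear, sum_mul, ← sum_sub_distrib]
  refine IsBooleanDerivable.sum fun S _ => ?_
  rw [mul_assoc, ← mul_sub]
  by_cases hS : r S = 0
  · rw [hS, map_zero, zero_mul]
    exact IsBooleanDerivable.zero
  · refine ((isBooleanDerivable_prod_X_mul_sum_X_sub_C S a).mul_left _).mono ?_
    rw [totalDegree_C, zero_add]
    by_contra h
    exact hS (hr S (by omega))

end Polynomials

end MaxBisection

open MaxBisection in
/-- Max-Bisection completeness: for d ≤ n, every degree-d polynomial vanishing on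
the Boolean strings of length 2n with exactly n ones has a derivation from
{xᵢ² − xᵢ} ∪ {Σᵢ xᵢ − n} in which every term has degree at most d. -/
theorem stmt_12 (n d : ℕ) (hd : d ≤ n) (p : MvPolynomial (Fin (2 * n)) ℝ)
    (hdeg : p.totalDegree ≤ d)
    (hvan : ∀ x : Fin (2 * n) → ℝ, (∀ i, x i = 0 ∨ x i = 1) →
      (∑ i, x i) = (n : ℝ) → eval x p = 0) :
    ∃ (lam : Fin (2 * n) → MvPolynomial (Fin (2 * n)) ℝ)
      (mu : MvPolynomial (Fin (2 * n)) ℝ),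
      p = (∑ i, lam i * (X i ^ 2 - X i)) + mu * (∑ i, X i - C (n : ℝ)) ∧
      (∀ i, (lam i * (X i ^ 2 - X i)).totalDegree ≤ d) ∧
      (mu * (∑ i, X i - C (n : ℝ))).totalDegree ≤ d := by
  set c := multilinearCoeff p
  have hreduce := (isBooleanDerivable_sub_multilinear p).mono hdeg
  have hc : ∀ S : Finset (Fin (2 * n)), d < S.card → c S = 0 := fun S hS =>
    multilinearCoeff_eq_zero (hdeg.trans_lt hS)
  have hslice : ∀ T : Finset (Fin (2 * n)), T.card = n → ∑ S ∈ T.powerset, c S = 0 := by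
    intro T hT
    have hbool : ∀ i, (if i ∈ T then (1 : ℝ) else 0) = 0 ∨ (if i ∈ T then (1 : ℝ) else 0) = 1 :=
      fun i => by by_cases hi : i ∈ T <;> simp [hi]
    have := hvan _ hbool (by simp [hT])
    rwa [← sub_add_cancel p (multilinear c), map_add, hreduce.eval_eq_zero hbool, zero_add,
      eval_indicator_multilinear] at this
  obtain ⟨r, hr, hcr⟩ := exists_eq_up_add_mul hd (by simp) hc hslice
  have hmul := isBooleanDerivable_multilinear_mul_sum_X_sub_C (n : ℝ) hr
  rw [← funext hcr] at hmul
  obtain ⟨lam, hlam, hlamdeg⟩ := hreduce.sub hmul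
  refine ⟨lam, multilinear r, by rw [← hlam]; ring, hlamdeg, totalDegree_multilinear_mul_le ?_⟩
  intro S hS
  have := totalDegree_sum_X_sub_C_le (σ := Fin (2 * n)) (n : ℝ)
  by_contra h
  exact hS (hr S (by omega))
end

section
/- Let S(n) ⊆ {0,1}^{2n} be the Boolean strings with exactly n ones, and let r be a symmetric polynomial (invariant under all permutations of variables) of degree d ≤ n vanishing on S(n). Then r lies in the ideal generated by {xᵢ² − xᵢ : i ∈ [2n]} ∪ {Σᵢ xᵢ − n}. -/
open MvPolynomial

namespace Stmt13Aux

variable {m : ℕ}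

/-- The indicator polynomial of the Boolean point given by `t`. -/
noncomputable def delta (t : Finset (Fin m)) : MvPolynomial (Fin m) ℝ :=
  (∏ i ∈ t, X i) * ∏ i ∈ tᶜ, (1 - X i)

/-- The Boolean point given by `t`. -/
def pt (t : Finset (Fin m)) : Fin m → ℝ := fun i => if i ∈ t then 1 else 0

/-- The Boolean ideal. -/
noncomputable def J (m : ℕ) : Ideal (MvPolynomial (Fin m) ℝ) :=
  Ideal.span (Set.range fun j : Fin m => (X j ^ 2 - X j : MvPolynomial (Fin m) ℝ))

lemma sum_delta : ∑ t : Finset (Fin m), delta t = 1 := by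
  have := (Fintype.prod_add (fun i : Fin m => (X i : MvPolynomial (Fin m) ℝ))
    (fun i => 1 - X i)).symm
  simpa [delta] using this

lemma X_mul_delta_mem (t : Finset (Fin m)) (i : Fin m) :
    X i * delta t - C (pt t i) * delta t ∈ J m := by
  by_cases h : i ∈ t
  · have hdt : delta t = X i * ((∏ j ∈ t.erase i, X j) * ∏ j ∈ tᶜ, (1 - X j)) := by
      rw [delta, ← Finset.mul_prod_erase t _ h, mul_assoc]
    have : X i * delta t - C (pt t i) * delta t =
        (X i ^ 2 - X i) * ((∏ j ∈ t.erase i, X j) * ∏ j ∈ tᶜ, (1 - X j)) := by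
      rw [hdt, pt, if_pos h, map_one]; ring
    rw [this]
    exact Ideal.mul_mem_right _ _ (Ideal.subset_span ⟨i, rfl⟩)
  · have h' : i ∈ tᶜ := Finset.mem_compl.mpr h
    have hdt : delta t = (1 - X i) * ((∏ j ∈ t, X j) * ∏ j ∈ tᶜ.erase i, (1 - X j)) := by
      rw [delta, ← Finset.mul_prod_erase tᶜ _ h']; ring
    have : X i * delta t - C (pt t i) * delta t =
        (X i ^ 2 - X i) * (-((∏ j ∈ t, X j) * ∏ j ∈ tᶜ.erase i, (1 - X j))) := by
      rw [hdt, pt, if_neg h, map_zero]; ring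
    rw [this]
    exact Ideal.mul_mem_right _ _ (Ideal.subset_span ⟨i, rfl⟩)

lemma mul_delta_mem (g : MvPolynomial (Fin m) ℝ) (t : Finset (Fin m)) :
    g * delta t - C (eval (pt t) g) * delta t ∈ J m := by
  induction g using MvPolynomial.induction_on with
  | C a => simp
  | add p q hp hq =>
      have : (p + q) * delta t - C (eval (pt t) (p + q)) * delta t =
          (p * delta t - C (eval (pt t) p) * delta t) +
          (q * delta t - C (eval (pt t) q) * delta t) := by
        rw [map_add, map_add]; ring
      rw [this]; exact Ideal.add_mem _ hp hq
  | mul_X p i hp =>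
      have key : (p * X i) * delta t - C (eval (pt t) (p * X i)) * delta t =
          X i * (p * delta t - C (eval (pt t) p) * delta t) +
          C (eval (pt t) p) * (X i * delta t - C (pt t i) * delta t) := by
        rw [map_mul, eval_X, map_mul]; ring
      rw [key]
      exact Ideal.add_mem _ (Ideal.mul_mem_left _ _ hp)
        (Ideal.mul_mem_left _ _ (X_mul_delta_mem t i))

lemma mem_J (f : MvPolynomial (Fin m) ℝ) (h : ∀ t : Finset (Fin m), eval (pt t) f = 0) :
    f ∈ J m := by
  have h1 : f = ∑ t : Finset (Fin m), f * delta t := by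
    rw [← Finset.mul_sum, sum_delta, mul_one]
  rw [h1]
  refine Ideal.sum_mem _ fun t _ => ?_
  have := mul_delta_mem f t
  rwa [h t, map_zero, zero_mul, sub_zero] at this

end Stmt13Aux

open Stmt13Aux in
/-- A symmetric polynomial of degree d ≤ n vanishing on the Boolean strings of
length 2n with exactly n ones lies in the ideal generated by
{xᵢ² − xᵢ} ∪ {Σᵢ xᵢ − n}. -/
theorem stmt_13 (n d : ℕ) (hd : d ≤ n) (r : MvPolynomial (Fin (2 * n)) ℝ)
    (hsymm : r.IsSymmetric) (hdeg : r.totalDegree ≤ d)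
    (hvan : ∀ x : Fin (2 * n) → ℝ, (∀ i, x i = 0 ∨ x i = 1) →
      (∑ i, x i) = (n : ℝ) → eval x r = 0) :
    r ∈ Ideal.span ((Set.range fun i : Fin (2 * n) => (X i ^ 2 - X i : MvPolynomial (Fin (2 * n)) ℝ))
        ∪ {(∑ i, X i - C (n : ℝ) : MvPolynomial (Fin (2 * n)) ℝ)}) := by
  set I : Ideal (MvPolynomial (Fin (2 * n)) ℝ) := Ideal.span
    ((Set.range fun i : Fin (2 * n) => (X i ^ 2 - X i : MvPolynomial (Fin (2 * n)) ℝ))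
      ∪ {(∑ i, X i - C (n : ℝ) : MvPolynomial (Fin (2 * n)) ℝ)}) with hI
  have hJI : J (2 * n) ≤ I := Ideal.span_mono Set.subset_union_left
  -- the univariate polynomial P with P(n) = 1, P(k) = 0 for k ∈ {0,…,2n} \ {n}
  set P : Polynomial ℝ :=
    ∏ k ∈ (Finset.range (2 * n + 1)).erase n,
      Polynomial.C (((n : ℝ) - k)⁻¹) * (Polynomial.X - Polynomial.C (k : ℝ)) with hP
  have hPn : Polynomial.eval (n : ℝ) P = 1 := by
    rw [hP, Polynomial.eval_prod]
    refine Finset.prod_eq_one fun k hk => ?_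
    have hkn : k ≠ n := Finset.ne_of_mem_erase hk
    have : ((n : ℝ) - k) ≠ 0 := sub_ne_zero.mpr (by exact_mod_cast (Ne.symm hkn))
    simp [inv_mul_cancel₀ this]
  have hPk : ∀ k ∈ (Finset.range (2 * n + 1)).erase n, Polynomial.eval (k : ℝ) P = 0 := by
    intro k hk
    rw [hP, Polynomial.eval_prod]
    exact Finset.prod_eq_zero hk (by simp)
  obtain ⟨Q, hQ⟩ : (Polynomial.X - Polynomial.C (n : ℝ)) ∣ (1 - P) :=
    Polynomial.dvd_iff_isRoot.mpr (by simp [Polynomial.IsRoot, hPn])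
  set S : MvPolynomial (Fin (2 * n)) ℝ := ∑ i, X i with hS
  set AP : MvPolynomial (Fin (2 * n)) ℝ := Polynomial.aeval S P with hAP
  -- r * AP vanishes on every Boolean point
  have hvanish : ∀ t : Finset (Fin (2 * n)), eval (pt t) (r * AP) = 0 := by
    intro t
    have hbool : ∀ i, pt t i = 0 ∨ pt t i = 1 := by
      intro i; by_cases h : i ∈ t <;> simp [pt, h]
    have hsum : eval (pt t) S = (t.card : ℝ) := by
      rw [hS, map_sum]
      simp only [eval_X, pt]
      rw [Finset.sum_ite_mem, Finset.univ_inter, Finset.sum_const, nsmul_eq_mul, mul_one]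
    have hevalAP : eval (pt t) AP = Polynomial.eval (eval (pt t) S) P := by
      have h1 := Polynomial.aeval_algHom_apply (MvPolynomial.aeval (pt t) :
        MvPolynomial (Fin (2 * n)) ℝ →ₐ[ℝ] ℝ) S P
      have h2 : ∀ g : MvPolynomial (Fin (2 * n)) ℝ, MvPolynomial.aeval (pt t) g = eval (pt t) g :=
        fun g => RingHom.congr_fun (MvPolynomial.coe_aeval_eq_eval (pt t)) g
      rw [hAP, ← h2, ← h1, h2, ← Polynomial.coe_aeval_eq_eval]
    rw [map_mul]
    by_cases hc : t.card = n
    · have : eval (pt t) r = 0 := by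
        apply hvan (pt t) hbool
        rw [show (∑ i, pt t i) = eval (pt t) S by rw [hS, map_sum]; simp, hsum, hc]
      rw [this, zero_mul]
    · have hmem : t.card ∈ (Finset.range (2 * n + 1)).erase n := by
        refine Finset.mem_erase.mpr ⟨hc, Finset.mem_range.mpr ?_⟩
        have := t.card_le_univ
        simp only [Finset.card_univ, Fintype.card_fin] at this
        omega
      rw [hevalAP, hsum, hPk _ hmem, mul_zero]
  have h1 : r * AP ∈ I := hJI (mem_J _ hvanish)
  have h2 : r - r * AP ∈ I := by
    have hfac : r - r * AP = r * Polynomial.aeval S Q * (S - C (n : ℝ)) := by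
      have : (1 : MvPolynomial (Fin (2 * n)) ℝ) - AP = (S - C (n : ℝ)) * Polynomial.aeval S Q := by
        rw [hAP]
        have := congrArg (Polynomial.aeval S) hQ
        simpa [Polynomial.algebraMap_eq] using this
      calc r - r * AP = r * (1 - AP) := by ring
        _ = r * Polynomial.aeval S Q * (S - C (n : ℝ)) := by rw [this]; ring
    rw [hfac]
    exact Ideal.mul_mem_left _ _ (Ideal.subset_span (Set.mem_union_right _ rfl))
  have := Ideal.add_mem _ h2 h1
  simpa using this
end

section
/- For 0 < ε < 1/2 and n ≥ 1, the following polynomial identity holds in ℝ[y₁,…,y_n]: ε − y₁ = Σ_{i=1}^{n} (√(ε/n) − (n/(4ε))^{(2^i − 1)/2} · yᵢ)² + Σ_{i=1}^{n−1} σᵢ(y)·(yᵢ² − y_{i+1}) + λ(y)·y_n², for suitable polynomials σ₁,…,σ_{n−1}, λ of degree at most 0; i.e., ε − y₁ minus the sum of squares Σ_{i=1}^{n}(√(ε/n) − (n/(4ε))^{(2^i−1)/2} yᵢ)² lies in the ideal generated by {yᵢ² − y_{i+1} : 1 ≤ i ≤ n−1} ∪ {y_n²}, with constant cofactors. -/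
open MvPolynomial

noncomputable def bb (c : ℝ) (k : ℕ) : ℝ := c ^ (((2:ℝ) ^ (k+1) - 1) / 2)

lemma bb_sq {c : ℝ} (hc : 0 < c) (k : ℕ) : (bb c k)^2 = c ^ ((2:ℝ)^(k+1) - 1) := by
  rw [bb, ← Real.rpow_natCast (c ^ _) 2, ← Real.rpow_mul hc.le]
  congr 1
  push_cast
  ring

lemma key_step {c : ℝ} (hc : 0 < c) (k : ℕ) :
    c ^ (-(1/2) : ℝ) * bb c (k+1) = (bb c k)^2 := by
  rw [bb_sq hc, bb, ← Real.rpow_add hc]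
  congr 1
  rw [pow_succ]
  ring

lemma key_zero {c : ℝ} (hc : 0 < c) : c ^ (-(1/2) : ℝ) * bb c 0 = 1 := by
  rw [bb, ← Real.rpow_add hc]
  have : -(1/2:ℝ) + ((2:ℝ)^(0+1) - 1)/2 = 0 := by norm_num
  rw [this, Real.rpow_zero]

lemma two_sqrt {ε N : ℝ} (hε : 0 < ε) (hN : 0 < N) :
    2 * Real.sqrt (ε / N) = (N / (4 * ε)) ^ (-(1/2) : ℝ) := by
  have hc : 0 < N / (4*ε) := by positivity
  rw [Real.rpow_neg hc.le, ← Real.sqrt_eq_rpow, ← Real.sqrt_inv,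
    show (N/(4*ε))⁻¹ = 4*(ε/N) by field_simp,
    Real.sqrt_mul (by norm_num : (0:ℝ) ≤ 4),
    show Real.sqrt 4 = 2 by rw [show (4:ℝ) = 2^2 by norm_num, Real.sqrt_sq (by norm_num : (0:ℝ) ≤ 2)]]

/-- For 0 < ε < 1/2, the polynomial ε − y₁ equals the sum of squares
Σᵢ (√(ε/n) − (n/(4ε))^{(2^i−1)/2} yᵢ)² plus a combination of the constraints
{yᵢ² − y_{i+1}} ∪ {y_n²} with constant cofactors.  (Variables are 0-indexed:
X i stands for y_{i+1}.) -/
theorem stmt_15 (n : ℕ) (hn : 1 ≤ n) (ε : ℝ) (hε0 : 0 < ε) (hε : ε < 1 / 2) :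
    ∃ (σ : Fin n → ℝ) (lam : ℝ),
      (C ε - X ⟨0, by omega⟩ : MvPolynomial (Fin n) ℝ) =
        (∑ i : Fin n,
          (C (Real.sqrt (ε / n)) -
            C (((n : ℝ) / (4 * ε)) ^ (((2 : ℝ) ^ ((i : ℕ) + 1) - 1) / 2)) * X i) ^ 2)
        + (∑ i : Fin n,
            if h : (i : ℕ) + 1 < n then C (σ i) * (X i ^ 2 - X ⟨(i : ℕ) + 1, h⟩) else 0)
        + C lam * X ⟨n - 1, by omega⟩ ^ 2 := by
  obtain ⟨m, rfl⟩ : ∃ m, n = m + 1 := ⟨n - 1, by omega⟩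
  have hN : (0:ℝ) < ((m+1 : ℕ) : ℝ) := by positivity
  set c : ℝ := ((m+1 : ℕ) : ℝ) / (4 * ε) with hc
  have hcpos : 0 < c := by positivity
  set a : ℝ := Real.sqrt (ε / ((m+1:ℕ):ℝ)) with ha
  have h2a : 2 * a = c ^ (-(1/2):ℝ) := two_sqrt hε0 hN
  have hfold : ∀ k : ℕ, c ^ (((2:ℝ) ^ (k+1) - 1) / 2) = bb c k := fun _ => rfl
  refine ⟨fun i => -(bb c (i:ℕ))^2, -(bb c m)^2, ?_⟩
  simp only [hfold]
  have hsq : ∀ i : Fin (m+1), (C a - C (bb c (i:ℕ)) * X i)^2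
      = (C (a^2) : MvPolynomial (Fin (m+1)) ℝ) - C (2*a*(bb c (i:ℕ))) * X i
        + C ((bb c (i:ℕ))^2) * X i^2 := by
    intro i
    simp only [map_mul, map_pow, map_ofNat]
    ring
  have h0 : (⟨0, by omega⟩ : Fin (m+1)) = 0 := rfl
  have hlast : (⟨m+1-1, by omega⟩ : Fin (m+1)) = Fin.last m := rfl
  have eA : (∑ _i : Fin (m+1), (C (a^2) : MvPolynomial (Fin (m+1)) ℝ)) = C ε := by
    rw [Finset.sum_const, Finset.card_univ, Fintype.card_fin, ← map_nsmul]
    congr 1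
    rw [nsmul_eq_mul, ha, Real.sq_sqrt (by positivity)]
    field_simp
  have eB : (∑ i : Fin (m+1), C (2*a*(bb c (i:ℕ))) * X i)
      = X 0 + ∑ i : Fin m, C ((bb c (i:ℕ))^2) * X i.succ := by
    rw [Fin.sum_univ_succ]
    congr 1
    · simp only [Fin.val_zero, h2a, key_zero hcpos, map_one, one_mul]
    · apply Finset.sum_congr rfl
      intro i _
      congr 1
      simp only [Fin.val_succ, h2a, key_step hcpos]
  have eD : (∑ i : Fin (m+1), C ((bb c (i:ℕ))^2) * X i ^ 2)
      = (∑ i : Fin m, C ((bb c (i:ℕ))^2) * X i.castSucc ^ 2)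
        + C ((bb c m)^2) * X (Fin.last m) ^ 2 := by
    rw [Fin.sum_univ_castSucc]
    simp only [Fin.coe_castSucc, Fin.val_last]
  have eDite : (∑ i : Fin (m+1),
        if h : (i:ℕ)+1 < m+1 then C (-(bb c (i:ℕ))^2) * (X i^2 - X ⟨(i:ℕ)+1, h⟩) else 0)
      = (∑ i : Fin m, C ((bb c (i:ℕ))^2) * X i.succ)
        - ∑ i : Fin m, C ((bb c (i:ℕ))^2) * X i.castSucc ^ 2 := by
    rw [Fin.sum_univ_castSucc, dif_neg (by simp : ¬(((Fin.last m : Fin (m+1)):ℕ)+1 < m+1)),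
      add_zero, ← Finset.sum_sub_distrib]
    apply Finset.sum_congr rfl
    intro i _
    rw [dif_pos (by simpa [Fin.coe_castSucc] using i.isLt)]
    have hx : (⟨(i.castSucc : ℕ)+1, by have := i.isLt; simp only [Fin.coe_castSucc]; omega⟩ : Fin (m+1)) = i.succ := by
      apply Fin.ext; simp
    rw [hx]
    simp only [Fin.coe_castSucc, map_neg]
    ring
  rw [h0, hlast]
  simp only [hsq]
  rw [Finset.sum_add_distrib, Finset.sum_sub_distrib, eA, eB, eD, eDite, map_neg, neg_mul]
  ring
end

section
/- Let S be a finite nonempty subset of {0,1}^n, let v(α) be the vector of evaluations at α of all monomials of degree at most d (of which there are N ≤ (n+1)^d), and let M = E_{α∈S}[v(α)v(α)^T] denote the moment matrix (expectation over uniform distribution on S). Then every nonzero eigenvalue of M is at least (|S|·N)^{−N} ≥ 2^{−poly(n^d)}; in particular 1/δ ≤ (2^n · N)^N where δ is the least nonzero eigenvalue. -/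
/-- Index type for the monomials of degree at most d in n variables. -/
def MonIdx (n d : ℕ) : Type := {m : Fin n → ℕ // ∑ i, m i ≤ d}

instance (n d : ℕ) : DecidableEq (MonIdx n d) :=
  fun a b => decidable_of_iff (a.1 = b.1) Subtype.ext_iff.symm

noncomputable instance (n d : ℕ) : Fintype (MonIdx n d) := by
  have h : Finite (MonIdx n d) := by
    apply Finite.of_injective
      (fun m : MonIdx n d => fun i : Fin n =>
        (⟨m.1 i, Nat.lt_succ_of_le (le_trans (Finset.single_le_sum
          (fun j _ => Nat.zero_le (m.1 j)) (Finset.mem_univ i)) m.2)⟩ : Fin (d + 1)))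
    intro a b hab
    apply Subtype.ext
    funext i
    exact congrArg Fin.val (congrFun hab i)
  exact Fintype.ofFinite _

/-- The vector of evaluations at x of all monomials of degree at most d. -/
def monVec (n d : ℕ) (x : Fin n → ℝ) : MonIdx n d → ℝ :=
  fun m => ∏ i, x i ^ m.1 i

/-! Scaling the moment matrix by |S| gives `G = ∑ v(α) v(α)ᵀ`, a positive semidefinite matrix with
integer entries whose trace is at most |S|·N. Its characteristic polynomial has integer
coefficients, so the product of its nonzero eigenvalues, being up to sign the lowest nonvanishing
coefficient, is at least 1. Every eigenvalue of `G` is at most its trace, so a nonzero eigenvalue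
`μ` satisfies `1 ≤ μ (|S| N)^(N-1)`; dividing by |S| gives the bound for `M`. -/

open Polynomial Matrix Finset

theorem Polynomial.one_le_abs_prod_ne_zero_of_map_eq_prod {ι : Type*} [Fintype ι] (p : ℤ[X])
    (μ : ι → ℝ) (hp : p.map (Int.castRingHom ℝ) = ∏ j, (X - C (μ j))) :
    1 ≤ |∏ j ∈ univ.filter (μ · ≠ 0), μ j| := by
  classical
  set Z := univ.filter (μ · = 0)
  set T := univ.filter (μ · ≠ 0)
  have hsplit : ∏ j, (X - C (μ j)) = X ^ #Z * ∏ j ∈ T, (X - C (μ j)) := by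
    rw [← prod_filter_mul_prod_filter_not univ (μ · = 0), prod_congr rfl fun j hj => by
      rw [(mem_filter.1 hj).2, C_0, sub_zero], prod_const]
  -- the lowest nonvanishing coefficient is, up to sign, the product of the nonzero roots
  have hcoeff : (p.coeff #Z : ℝ) = ∏ j ∈ T, -μ j := by
    rw [← eq_intCast (Int.castRingHom ℝ), ← coeff_map, hp, hsplit, coeff_X_pow_mul', if_pos le_rfl,
      Nat.sub_self, coeff_zero_eq_eval_zero, eval_prod]
    simp
  have hne : p.coeff #Z ≠ 0 := by
    have : ∏ j ∈ T, -μ j ≠ 0 := prod_ne_zero_iff.2 fun j hj => neg_ne_zero.2 (mem_filter.1 hj).2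
    exact_mod_cast hcoeff ▸ this
  calc (1 : ℝ) ≤ |(p.coeff #Z : ℝ)| := by exact_mod_cast Int.one_le_abs hne
    _ = |∏ j ∈ T, μ j| := by rw [hcoeff, abs_prod, abs_prod]; simp_rw [abs_neg]

theorem Finset.one_le_mul_pow_of_one_le_prod {ι : Type*} [DecidableEq ι] {T : Finset ι}
    {μ : ι → ℝ} {B : ℝ} (hμ : ∀ j ∈ T, 0 ≤ μ j ∧ μ j ≤ B) (hprod : 1 ≤ ∏ j ∈ T, μ j)
    {i : ι} (hi : i ∈ T) :
    1 ≤ μ i * B ^ (#T - 1) :=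
  calc 1 ≤ ∏ j ∈ T, μ j := hprod
    _ = μ i * ∏ j ∈ T.erase i, μ j := (mul_prod_erase T μ hi).symm
    _ ≤ μ i * B ^ (#T - 1) := by
      rw [← card_erase_of_mem hi, ← prod_const]
      exact mul_le_mul_of_nonneg_left (prod_le_prod (fun j hj => (hμ j (mem_of_mem_erase hj)).1)
        fun j hj => (hμ j (mem_of_mem_erase hj)).2) (hμ i hi).1

theorem Polynomial.one_le_mul_pow_of_map_eq_prod {ι : Type*} [Fintype ι] (p : ℤ[X]) (μ : ι → ℝ)
    (hp : p.map (Int.castRingHom ℝ) = ∏ j, (X - C (μ j))) {B : ℝ} (hB : 1 ≤ B)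
    (hμ : ∀ j, 0 ≤ μ j ∧ μ j ≤ B) {i : ι} (hi : μ i ≠ 0) :
    1 ≤ μ i * B ^ (Fintype.card ι - 1) := by
  classical
  have hprod := p.one_le_abs_prod_ne_zero_of_map_eq_prod μ hp
  rw [abs_of_nonneg (prod_nonneg fun j _ => (hμ j).1)] at hprod
  calc 1 ≤ μ i * B ^ (#(univ.filter (μ · ≠ 0)) - 1) :=
        one_le_mul_pow_of_one_le_prod (fun j _ => hμ j) hprod (mem_filter.2 ⟨mem_univ i, hi⟩)
    _ ≤ μ i * B ^ (Fintype.card ι - 1) := mul_le_mul_of_nonneg_left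
        (pow_le_pow_right₀ hB (Nat.sub_le_sub_right (card_filter_le _ _) 1)) (hμ i).1

theorem Matrix.IsHermitian.charpoly_smul {ι : Type*} [Fintype ι] [DecidableEq ι]
    {A : Matrix ι ι ℝ} (hA : A.IsHermitian) (c : ℝ) :
    (c • A).charpoly = ∏ j, (X - C (c * hA.eigenvalues j)) := by
  rw [← cfc_const_mul_id c A, hA.charpoly_cfc_eq]
  rfl

theorem Matrix.PosSemidef.eigenvalues_le_trace {ι : Type*} [Fintype ι] [DecidableEq ι]
    {A : Matrix ι ι ℝ} (hA : A.PosSemidef) (i : ι) : hA.1.eigenvalues i ≤ A.trace := by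
  rw [hA.1.trace_eq_sum_eigenvalues]
  exact single_le_sum (fun j _ => hA.eigenvalues_nonneg j) (mem_univ i)

section BinaryVectors

variable {α ι : Type*} (S : Finset α) {w : α → ι → ℝ}

theorem Matrix.trace_sum_vecMulVec_le_of_binary [Fintype ι]
    (hw : ∀ x ∈ S, ∀ j, w x j = 0 ∨ w x j = 1) :
    (∑ x ∈ S, vecMulVec (w x) (w x)).trace ≤ #S * Fintype.card ι := by
  rw [trace_sum, ← nsmul_eq_mul, ← sum_const]
  refine sum_le_sum fun x hx => ?_
  rw [trace_vecMulVec, dotProduct, ← nsmul_one, ← card_univ, ← sum_const]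
  exact sum_le_sum fun j _ => by rcases hw x hx j with h | h <;> simp [h]

theorem Matrix.exists_map_intCast_eq_sum_vecMulVec_of_binary
    (hw : ∀ x ∈ S, ∀ j, w x j = 0 ∨ w x j = 1) :
    ∃ A : Matrix ι ι ℤ, A.map (Int.castRingHom ℝ) = ∑ x ∈ S, vecMulVec (w x) (w x) := by
  have hint : ∀ x ∈ S, ∀ j, w x j ∈ (Int.castRingHom ℝ).range := fun x hx j => by
    rcases hw x hx j with h | h
    · exact ⟨0, by simp [h]⟩
    · exact ⟨1, by simp [h]⟩
  have hmem : ∀ j k, (∑ x ∈ S, vecMulVec (w x) (w x)) j k ∈ (Int.castRingHom ℝ).range :=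
    fun j k => by
      rw [sum_apply]
      exact Subring.sum_mem _ fun x hx => Subring.mul_mem _ (hint x hx j) (hint x hx k)
  exact ⟨fun j k => (hmem j k).choose, by ext j k; exact (hmem j k).choose_spec⟩

end BinaryVectors

theorem Matrix.one_le_eigenvalues_mul_pow_of_binary {α ι : Type*} [Fintype ι] [DecidableEq ι]
    {S : Finset α} (hS : S.Nonempty) {w : α → ι → ℝ} (hw : ∀ x ∈ S, ∀ j, w x j = 0 ∨ w x j = 1)
    {M : Matrix ι ι ℝ} (hMdef : M = (#S : ℝ)⁻¹ • ∑ x ∈ S, vecMulVec (w x) (w x))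
    (hM : M.IsHermitian) {i : ι} (hi : hM.eigenvalues i ≠ 0) :
    1 ≤ hM.eigenvalues i * (#S * Fintype.card ι) ^ Fintype.card ι := by
  set N := Fintype.card ι
  set G := ∑ x ∈ S, vecMulVec (w x) (w x)
  have hc : (1 : ℝ) ≤ #S := by exact_mod_cast hS.card_pos
  have hN0 : 0 < N := Fintype.card_pos_iff.2 ⟨i⟩
  have hN : (1 : ℝ) ≤ N := by exact_mod_cast hN0
  have hG : (#S : ℝ) • M = G := by rw [hMdef, smul_inv_smul₀ (by positivity)]
  have hMpsd : M.PosSemidef := hMdef ▸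
    (posSemidef_sum S fun x _ => posSemidef_vecMulVec_self_star (w x)).smul (by positivity)
  obtain ⟨Gz, hGz⟩ : ∃ Gz : Matrix ι ι ℤ, Gz.map (Int.castRingHom ℝ) = G :=
    exists_map_intCast_eq_sum_vecMulVec_of_binary S hw
  have hchar : Gz.charpoly.map (Int.castRingHom ℝ) = ∏ j, (X - C (#S * hM.eigenvalues j)) := by
    rw [← charpoly_map, hGz, ← hG, hM.charpoly_smul]
  have hbound : ∀ j, 0 ≤ #S * hM.eigenvalues j ∧ #S * hM.eigenvalues j ≤ #S * N := fun j =>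
    ⟨mul_nonneg (by positivity) (hMpsd.eigenvalues_nonneg j), calc
      #S * hM.eigenvalues j ≤ #S * M.trace := by gcongr; exact hMpsd.eigenvalues_le_trace j
      _ = G.trace := by rw [← hG, trace_smul, smul_eq_mul]
      _ ≤ #S * N := trace_sum_vecMulVec_le_of_binary S hw⟩
  calc 1 ≤ #S * hM.eigenvalues i * (#S * N) ^ (N - 1) :=
        Gz.charpoly.one_le_mul_pow_of_map_eq_prod _ hchar (one_le_mul_of_one_le_of_one_le hc hN)
          hbound (mul_ne_zero (by positivity) hi)
    _ = hM.eigenvalues i * (#S * (#S * N) ^ (N - 1)) := by ring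
    _ ≤ hM.eigenvalues i * (#S * N * (#S * N) ^ (N - 1)) := by
      gcongr
      · exact hMpsd.eigenvalues_nonneg i
      · exact le_mul_of_one_le_right (by positivity) hN
    _ = hM.eigenvalues i * (#S * N) ^ N := by rw [← pow_succ', Nat.sub_add_cancel hN0]

theorem monVec_eq_zero_or_one {n d : ℕ} {x : Fin n → ℝ} (hx : ∀ i, x i = 0 ∨ x i = 1)
    (m : MonIdx n d) : monVec n d x m = 0 ∨ monVec n d x m = 1 := by
  refine prod_induction _ (fun y => y = 0 ∨ y = 1) (fun a b ha hb => ?_) (Or.inr rfl) fun i _ => ?_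
  · rcases ha with rfl | rfl <;> simp [hb]
  · rcases hx i with h | h <;> simp [h, zero_pow_eq, em']

theorem Finset.card_le_two_pow_of_binary {n : ℕ} {S : Finset (Fin n → ℝ)}
    (hS : ∀ x ∈ S, ∀ i, x i = 0 ∨ x i = 1) : #S ≤ 2 ^ n := by
  calc #S ≤ #(Fintype.piFinset fun _ : Fin n => ({0, 1} : Finset ℝ)) :=
        card_le_card fun x hx => Fintype.mem_piFinset.2 fun i => by simpa using hS x hx i
    _ = 2 ^ n := by simp

theorem zpow_neg_le_of_one_le_mul_pow {a b b' : ℝ} {N : ℕ} (hb : 0 < b) (hbb' : b ≤ b')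
    (h : 1 ≤ a * b ^ N) : b' ^ (-(N : ℤ)) ≤ a := by
  rw [_root_.zpow_neg, zpow_natCast]
  calc (b' ^ N)⁻¹ ≤ (b ^ N)⁻¹ := inv_anti₀ (pow_pos hb N) (pow_le_pow_left₀ hb.le hbb' N)
    _ ≤ a := by rwa [inv_le_iff_one_le_mul₀ (pow_pos hb N)]

/-- For a nonempty S ⊆ {0,1}^n, the moment matrix M = E_{α∈S}[v(α)v(α)ᵀ] of the
monomials of degree at most d (N of them) has every nonzero eigenvalue at least
(|S|·N)^{−N}; in particular, since |S| ≤ 2^n, at least (2^n·N)^{−N}. -/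
theorem stmt_19 (n d : ℕ) (S : Finset (Fin n → ℝ)) (hS : S.Nonempty)
    (hS01 : ∀ x ∈ S, ∀ i, x i = 0 ∨ x i = 1)
    (M : Matrix (MonIdx n d) (MonIdx n d) ℝ)
    (hMdef : M = (S.card : ℝ)⁻¹ •
      ∑ x ∈ S, Matrix.vecMulVec (monVec n d x) (monVec n d x))
    (hM : M.IsHermitian) :
    ∀ i, hM.eigenvalues i ≠ 0 →
      ((S.card : ℝ) * (Fintype.card (MonIdx n d) : ℝ)) ^ (-(Fintype.card (MonIdx n d) : ℤ))
        ≤ hM.eigenvalues i ∧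
      ((2 ^ n : ℝ) * (Fintype.card (MonIdx n d) : ℝ)) ^ (-(Fintype.card (MonIdx n d) : ℤ))
        ≤ hM.eigenvalues i := by
  intro i hi
  have hkey := one_le_eigenvalues_mul_pow_of_binary hS
    (fun x hx => monVec_eq_zero_or_one (hS01 x hx)) hMdef hM hi
  have hpos : (0 : ℝ) < #S * Fintype.card (MonIdx n d) := by
    have := hS.card_pos
    have := Fintype.card_pos_iff.2 ⟨i⟩
    positivity
  refine ⟨zpow_neg_le_of_one_le_mul_pow hpos le_rfl hkey,
    zpow_neg_le_of_one_le_mul_pow hpos ?_ hkey⟩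
  gcongr
  exact_mod_cast card_le_two_pow_of_binary hS01
end
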